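/- arXiv:1508.05690 — 2 statements merged into one kernel-verified Lean document; each statement's English description precedes it below -/
import Mathlib

section
/- For all integers a, b ≥ 1 and n = a + b + 3, the tree P_3(a,b) satisfies ξ^{ee}(P_3(a,b)) = (7n − 1)/12. -/
open SimpleGraph

variable {V : Type*}

noncomputable def ecc (G : SimpleGraph V) (v : V) : ℕ := ⨆ u : V, G.dist v u

noncomputable def deg (G : SimpleGraph V) (v : V) : ℕ := (G.neighborSet v).ncard

noncomputable def ree {V : Type*} [Fintype V] (G : SimpleGraph V) : ℝ :=
  letI := Classical.decEq V
  letI := Classical.decRel G.Adj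
  ∑ e ∈ G.edgeFinset,
    Sym2.lift ⟨fun u v => 1 / (ecc G u : ℝ) + 1 / (ecc G v : ℝ), fun _ _ => by ring⟩ e

noncomputable def gdiam (G : SimpleGraph V) : ℕ := ⨆ v : V, ecc G v

/-- The tree `P_3(a,b)`: a path u–w–v (vertices 0, 1, 2) with `a` pendant vertices
attached to `u` (vertices 3, …, a+2) and `b` pendant vertices attached to `v`
(vertices a+3, …, a+b+2). -/
def P3ab (a b : ℕ) : SimpleGraph (Fin (a + b + 3)) :=
  SimpleGraph.fromRel (fun x y => (x.val = 0 ∧ y.val = 1) ∨ (x.val = 1 ∧ y.val = 2) ∨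
    (x.val = 0 ∧ 3 ≤ y.val ∧ y.val < a + 3) ∨ (x.val = 2 ∧ a + 3 ≤ y.val))


section Aux

variable {a b : ℕ}

def V0 (a b : ℕ) : Fin (a+b+3) := ⟨0, by omega⟩
def V1 (a b : ℕ) : Fin (a+b+3) := ⟨1, by omega⟩
def V2 (a b : ℕ) : Fin (a+b+3) := ⟨2, by omega⟩

lemma adj01 {x y : Fin (a+b+3)} (hx : x.val = 0) (hy : y.val = 1) : (P3ab a b).Adj x y := by
  rw [P3ab, SimpleGraph.fromRel_adj]
  exact ⟨fun h => by subst h; omega, Or.inl (Or.inl ⟨hx, hy⟩)⟩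

lemma adj12 {x y : Fin (a+b+3)} (hx : x.val = 1) (hy : y.val = 2) : (P3ab a b).Adj x y := by
  rw [P3ab, SimpleGraph.fromRel_adj]
  exact ⟨fun h => by subst h; omega, Or.inl (Or.inr (Or.inl ⟨hx, hy⟩))⟩

lemma adj0l {x y : Fin (a+b+3)} (hx : x.val = 0) (hy : 3 ≤ y.val) (hy' : y.val < a + 3) :
    (P3ab a b).Adj x y := by
  rw [P3ab, SimpleGraph.fromRel_adj]
  exact ⟨fun h => by subst h; omega, Or.inl (Or.inr (Or.inr (Or.inl ⟨hx, hy, hy'⟩)))⟩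

lemma adj2l {x y : Fin (a+b+3)} (hx : x.val = 2) (hy : a + 3 ≤ y.val) : (P3ab a b).Adj x y := by
  rw [P3ab, SimpleGraph.fromRel_adj]
  exact ⟨fun h => by subst h; omega, Or.inl (Or.inr (Or.inr (Or.inr ⟨hx, hy⟩)))⟩

/-- potential function used for distance lower bounds -/
def pot (a : ℕ) {b : ℕ} (x : Fin (a+b+3)) : ℤ :=
  if x.val = 0 then 0 else if x.val = 1 then 1 else if x.val = 2 then 2
  else if x.val < a + 3 then -1 else 3

lemma pot_lip {x y : Fin (a+b+3)} (h : (P3ab a b).Adj x y) :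
    ((pot a x) - (pot a y)).natAbs ≤ 1 := by
  rw [P3ab, SimpleGraph.fromRel_adj] at h
  obtain ⟨-, h⟩ := h
  unfold pot
  split_ifs <;> omega

lemma pot_walk {x y : Fin (a+b+3)} (w : (P3ab a b).Walk x y) :
    ((pot a x) - (pot a y)).natAbs ≤ w.length := by
  induction w with
  | nil => simp
  | cons h p ih =>
      have := pot_lip h
      rw [SimpleGraph.Walk.length_cons]
      omega

lemma dist_lower {x y : Fin (a+b+3)} (h : (P3ab a b).Reachable x y) :
    ((pot a x) - (pot a y)).natAbs ≤ (P3ab a b).dist x y := by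
  obtain ⟨w, hw⟩ := h.exists_walk_length_eq_dist
  rw [← hw]; exact pot_walk w

lemma walk1 (u : Fin (a+b+3)) :
    ∃ w : (P3ab a b).Walk (V1 a b) u, w.length ≤ 2 := by
  have hu := u.2
  by_cases h1 : u.val = 1
  · obtain rfl : V1 a b = u := Fin.ext h1.symm
    exact ⟨Walk.nil, by simp⟩
  by_cases h0 : u.val = 0
  · exact ⟨Walk.cons ((adj01 h0 rfl).symm) Walk.nil, by simp⟩
  by_cases h2 : u.val = 2
  · exact ⟨Walk.cons (adj12 rfl h2) Walk.nil, by simp⟩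
  by_cases hL : u.val < a + 3
  · exact ⟨Walk.cons ((adj01 (x := V0 a b) rfl rfl).symm)
      (Walk.cons (adj0l rfl (by omega) hL) Walk.nil), by simp⟩
  · exact ⟨Walk.cons (adj12 (y := V2 a b) rfl rfl)
      (Walk.cons (adj2l rfl (by omega)) Walk.nil), by simp⟩

lemma conn : (P3ab a b).Connected := by
  rw [SimpleGraph.connected_iff]
  refine ⟨fun x y => ?_, ⟨V1 a b⟩⟩
  exact ((walk1 x).choose.reachable.symm).trans (walk1 y).choose.reachable

lemma dist1_le (u : Fin (a+b+3)) : (P3ab a b).dist (V1 a b) u ≤ 2 := by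
  obtain ⟨w, hw⟩ := walk1 (a := a) (b := b) u
  exact le_trans (SimpleGraph.dist_le w) hw

lemma ecc_le {G : SimpleGraph (Fin (a+b+3))} {v : Fin (a+b+3)} {k : ℕ}
    (h : ∀ u, G.dist v u ≤ k) : ecc G v ≤ k := ciSup_le h

lemma le_ecc {G : SimpleGraph (Fin (a+b+3))} (v u : Fin (a+b+3)) :
    G.dist v u ≤ ecc G v :=
  le_ciSup (Set.Finite.bddAbove (Set.finite_range _)) u

lemma ecc_lb {v u : Fin (a+b+3)} {k : ℕ}
    (h : k ≤ ((pot a v) - (pot a u)).natAbs) : k ≤ ecc (P3ab a b) v :=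
  le_trans h (le_trans (dist_lower (conn v u)) (le_ecc v u))

lemma dist_le_dist1 (v u : Fin (a+b+3)) {k : ℕ} (h : (P3ab a b).dist v (V1 a b) ≤ k) :
    (P3ab a b).dist v u ≤ k + 2 :=
  le_trans (conn.dist_triangle (v := V1 a b)) (add_le_add h (dist1_le u))

lemma ecc1 (ha : 1 ≤ a) : ecc (P3ab a b) (V1 a b) = 2 := by
  refine le_antisymm (ecc_le dist1_le) (ecc_lb (u := ⟨3, by omega⟩) ?_)
  unfold pot V1
  simp only [Fin.val_mk]
  split_ifs <;> first | exact (‹False›).elim | omega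

lemma ecc0 (hb : 1 ≤ b) : ecc (P3ab a b) (V0 a b) = 3 := by
  refine le_antisymm (ecc_le fun u => dist_le_dist1 _ u (SimpleGraph.dist_le
    (Walk.cons (adj01 (x := V0 a b) (y := V1 a b) rfl rfl) Walk.nil))) ?_
  refine ecc_lb (u := ⟨a+3, by omega⟩) ?_
  unfold pot V0
  simp only [Fin.val_mk]
  split_ifs <;> first | exact (‹False›).elim | omega

lemma ecc2 (ha : 1 ≤ a) : ecc (P3ab a b) (V2 a b) = 3 := by
  refine le_antisymm (ecc_le fun u => dist_le_dist1 _ u (SimpleGraph.dist_le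
    (Walk.cons (adj12 (x := V1 a b) (y := V2 a b) rfl rfl).symm Walk.nil))) ?_
  refine ecc_lb (u := ⟨3, by omega⟩) ?_
  unfold pot V2
  simp only [Fin.val_mk]
  split_ifs <;> first | exact (‹False›).elim | omega

lemma eccL0 (hb : 1 ≤ b) {x : Fin (a+b+3)} (h3 : 3 ≤ x.val) (hx : x.val < a + 3) :
    ecc (P3ab a b) x = 4 := by
  refine le_antisymm (ecc_le fun u => dist_le_dist1 _ u (SimpleGraph.dist_le
    (Walk.cons ((adj0l (x := V0 a b) rfl h3 hx).symm)
      (Walk.cons (adj01 (x := V0 a b) (y := V1 a b) rfl rfl) Walk.nil)))) ?_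
  refine ecc_lb (u := ⟨a+3, by omega⟩) ?_
  unfold pot
  simp only [Fin.val_mk]
  split_ifs <;> first | exact (‹False›).elim | omega

lemma eccL2 (ha : 1 ≤ a) {x : Fin (a+b+3)} (hx : a + 3 ≤ x.val) :
    ecc (P3ab a b) x = 4 := by
  refine le_antisymm (ecc_le fun u => dist_le_dist1 _ u (SimpleGraph.dist_le
    (Walk.cons ((adj2l (x := V2 a b) rfl hx).symm)
      (Walk.cons ((adj12 (x := V1 a b) (y := V2 a b) rfl rfl).symm) Walk.nil)))) ?_
  refine ecc_lb (u := ⟨3, by omega⟩) ?_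
  have := x.2
  unfold pot
  simp only [Fin.val_mk]
  split_ifs <;> first | exact (‹False›).elim | omega

/-- explicit edge finset of `P3ab a b` -/
def EF (a b : ℕ) : Finset (Sym2 (Fin (a+b+3))) :=
  ({s(V0 a b, V1 a b), s(V1 a b, V2 a b)} : Finset (Sym2 (Fin (a+b+3)))) ∪
  ((Finset.Ico 3 (a+3)).attach.image fun i =>
    s(V0 a b, (⟨i.1, by have := (Finset.mem_Ico.mp i.2).2; omega⟩ : Fin (a+b+3)))) ∪
  ((Finset.Ico (a+3) (a+b+3)).attach.image fun i =>
    s(V2 a b, (⟨i.1, (Finset.mem_Ico.mp i.2).2⟩ : Fin (a+b+3))))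

lemma edgeSet_eq : (P3ab a b).edgeSet = ↑(EF a b) := by
  ext e
  induction e using Sym2.ind with
  | _ x y =>
    rw [SimpleGraph.mem_edgeSet, P3ab, SimpleGraph.fromRel_adj]
    simp only [EF, Finset.coe_union, Set.mem_union, Finset.coe_image, Set.mem_image,
      Finset.mem_coe, Finset.mem_insert, Finset.mem_singleton, Finset.mem_attach, true_and,
      Subtype.exists, Finset.mem_Ico, Sym2.eq_iff, Fin.ext_iff, Fin.val_mk, V0, V1, V2,
      Ne, exists_prop]
    constructor
    · rintro ⟨hne, (⟨h1,h2⟩|⟨h1,h2⟩|⟨h1,h2,h3⟩|⟨h1,h2⟩)|(⟨h1,h2⟩|⟨h1,h2⟩|⟨h1,h2,h3⟩|⟨h1,h2⟩)⟩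
      · exact Or.inl (Or.inl (Or.inl (Or.inl ⟨h1, h2⟩)))
      · exact Or.inl (Or.inl (Or.inr (Or.inl ⟨h1, h2⟩)))
      · exact Or.inl (Or.inr ⟨y.val, ⟨h2, h3⟩, Or.inl ⟨h1.symm, rfl⟩⟩)
      · exact Or.inr ⟨y.val, ⟨h2, y.2⟩, Or.inl ⟨h1.symm, rfl⟩⟩
      · exact Or.inl (Or.inl (Or.inl (Or.inr ⟨h2, h1⟩)))
      · exact Or.inl (Or.inl (Or.inr (Or.inr ⟨h2, h1⟩)))
      · exact Or.inl (Or.inr ⟨x.val, ⟨h2, h3⟩, Or.inr ⟨h1.symm, rfl⟩⟩)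
      · exact Or.inr ⟨x.val, ⟨h2, x.2⟩, Or.inr ⟨h1.symm, rfl⟩⟩
    · rintro ((h|⟨i, hi, h⟩)|⟨i, hi, h⟩) <;> omega

lemma ree_eq_sum {W : Type*} [Fintype W] (G : SimpleGraph W) (E : Finset (Sym2 W))
    (h : G.edgeSet = ↑E) :
    ree G = ∑ e ∈ E,
      Sym2.lift ⟨fun u v => 1 / (ecc G u : ℝ) + 1 / (ecc G v : ℝ), fun _ _ => by ring⟩ e := by
  unfold ree
  congr 1
  exact Finset.coe_injective (by rw [SimpleGraph.coe_edgeFinset, h])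

end Aux

/-- for a, b ≥ 1 and n = a + b + 3, ξ^{ee}(P_3(a,b)) = (7n-1)/12. -/
theorem stmt14 (a b : ℕ) (ha : 1 ≤ a) (hb : 1 ≤ b) :
    ree (P3ab a b) = (7 * ((a : ℝ) + b + 3) - 1) / 12 := by
  rw [ree_eq_sum _ _ edgeSet_eq, EF]
  have hd1 : Disjoint ({s(V0 a b, V1 a b), s(V1 a b, V2 a b)} : Finset (Sym2 (Fin (a+b+3))))
      ((Finset.Ico 3 (a+3)).attach.image fun i =>
        s(V0 a b, (⟨i.1, by have := (Finset.mem_Ico.mp i.2).2; omega⟩ : Fin (a+b+3)))) := by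
    rw [Finset.disjoint_right]
    intro e he1 he2
    simp only [Finset.mem_image, Finset.mem_attach, true_and, Subtype.exists,
      Finset.mem_Ico] at he1
    obtain ⟨i, hi, rfl⟩ := he1
    simp only [Finset.mem_insert, Finset.mem_singleton, Sym2.eq_iff, Fin.ext_iff, Fin.val_mk,
      V0, V1, V2] at he2
    omega
  have hd2 : Disjoint
      ((({s(V0 a b, V1 a b), s(V1 a b, V2 a b)} : Finset (Sym2 (Fin (a+b+3)))) ∪
        ((Finset.Ico 3 (a+3)).attach.image fun i =>
          s(V0 a b, (⟨i.1, by have := (Finset.mem_Ico.mp i.2).2; omega⟩ : Fin (a+b+3))))))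
      ((Finset.Ico (a+3) (a+b+3)).attach.image fun i =>
        s(V2 a b, (⟨i.1, (Finset.mem_Ico.mp i.2).2⟩ : Fin (a+b+3)))) := by
    rw [Finset.disjoint_right]
    intro e he1 he2
    simp only [Finset.mem_image, Finset.mem_attach, true_and, Subtype.exists,
      Finset.mem_Ico] at he1
    obtain ⟨i, hi, rfl⟩ := he1
    simp only [Finset.mem_union, Finset.mem_insert, Finset.mem_singleton, Finset.mem_image,
      Finset.mem_attach, true_and, Subtype.exists, Finset.mem_Ico, Sym2.eq_iff, Fin.ext_iff,
      Fin.val_mk, V0, V1, V2] at he2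
    obtain (h|h) | ⟨j, hj, h⟩ := he2 <;> omega
  rw [Finset.sum_union hd2, Finset.sum_union hd1]
  have hne : s(V0 a b, V1 a b) ≠ s(V1 a b, V2 a b) := by
    simp [Sym2.eq_iff, Fin.ext_iff, V0, V1, V2]
  rw [Finset.sum_pair hne]
  rw [Finset.sum_image (by
    intro i _ j _ hij
    simp only [Sym2.eq_iff, Fin.ext_iff, Fin.val_mk, V0] at hij
    have hi := (Finset.mem_Ico.mp i.2)
    have hj := (Finset.mem_Ico.mp j.2)
    exact Subtype.ext (by omega))]
  rw [Finset.sum_image (by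
    intro i _ j _ hij
    simp only [Sym2.eq_iff, Fin.ext_iff, Fin.val_mk, V2] at hij
    have hi := (Finset.mem_Ico.mp i.2)
    have hj := (Finset.mem_Ico.mp j.2)
    exact Subtype.ext (by omega))]
  have e1 : ∀ i : {x // x ∈ Finset.Ico 3 (a+3)},
      Sym2.lift ⟨fun u v => 1 / (ecc (P3ab a b) u : ℝ) + 1 / (ecc (P3ab a b) v : ℝ),
        fun _ _ => by ring⟩
        s(V0 a b, (⟨i.1, by have := (Finset.mem_Ico.mp i.2).2; omega⟩ : Fin (a+b+3)))
      = (7:ℝ)/12 := by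
    intro i
    have hi := Finset.mem_Ico.mp i.2
    simp only [Sym2.lift_mk]
    rw [ecc0 hb, eccL0 hb (x := ⟨i.1, by omega⟩) hi.1 hi.2]
    norm_num
  have e2 : ∀ i : {x // x ∈ Finset.Ico (a+3) (a+b+3)},
      Sym2.lift ⟨fun u v => 1 / (ecc (P3ab a b) u : ℝ) + 1 / (ecc (P3ab a b) v : ℝ),
        fun _ _ => by ring⟩
        s(V2 a b, (⟨i.1, (Finset.mem_Ico.mp i.2).2⟩ : Fin (a+b+3)))
      = (7:ℝ)/12 := by
    intro i
    have hi := Finset.mem_Ico.mp i.2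
    simp only [Sym2.lift_mk]
    rw [ecc2 ha, eccL2 ha (x := ⟨i.1, hi.2⟩) hi.1]
    norm_num
  rw [Finset.sum_congr rfl (fun i _ => e1 i), Finset.sum_congr rfl (fun i _ => e2 i),
    Finset.sum_const, Finset.sum_const, Finset.card_attach, Finset.card_attach,
    Nat.card_Ico, Nat.card_Ico, show a + 3 - 3 = a from by omega,
    show a + b + 3 - (a + 3) = b from by omega]
  simp only [Sym2.lift_mk]
  rw [ecc0 hb, ecc1 ha, ecc2 ha]
  rw [nsmul_eq_mul, nsmul_eq_mul]
  push_cast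
  ring
end

section
/- Let p and q be integers with q ≥ p > 2 and n = p + q, and let T be a tree on n vertices whose two bipartition classes have sizes p and q. Then ξ^{ee}(T) ≤ (5n−4)/6, with equality if and only if T is the double star obtained from an edge uv by attaching q−1 pendant vertices to u and p−1 pendant vertices to v. -/
open SimpleGraph

variable {V : Type*}

/-- The double star `P_2(a,b)`: an edge `uv` (vertices 0 and 1) with `a` pendant
vertices attached to `u` (vertices 2, …, a+1) and `b` pendant vertices attached
to `v` (vertices a+2, …, a+b+1). -/
def doubleStar (a b : ℕ) : SimpleGraph (Fin (a + b + 2)) :=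
  SimpleGraph.fromRel (fun x y => (x.val = 0 ∧ y.val = 1) ∨
    (x.val = 0 ∧ 2 ≤ y.val ∧ y.val < a + 2) ∨ (x.val = 1 ∧ a + 2 ≤ y.val))

lemma ecc_le_iff [Finite V] [Nonempty V] {G : SimpleGraph V} {v : V} {k : ℕ} :
    ecc G v ≤ k ↔ ∀ u, G.dist v u ≤ k := by
  rw [ecc]; exact ciSup_le_iff (Set.Finite.bddAbove (Set.finite_range _))

lemma dist_le_ecc [Finite V] {G : SimpleGraph V} (v u : V) : G.dist v u ≤ ecc G v :=
  le_ciSup (Set.Finite.bddAbove (Set.finite_range _)) u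

lemma no_common {T : SimpleGraph V} {A : Set V}
    (hbip : ∀ x y, T.Adj x y → (x ∈ A ↔ y ∉ A)) {u v x : V}
    (huv : T.Adj u v) (hxu : T.Adj x u) (hxv : T.Adj x v) : False := by
  have h1 := hbip _ _ huv; have h2 := hbip _ _ hxu; have h3 := hbip _ _ hxv; tauto

lemma not_all_adj {T : SimpleGraph V} {A : Set V} {p q : ℕ}
    (hbip : ∀ x y, T.Adj x y → (x ∈ A ↔ y ∉ A))
    (hA : A.ncard = p) (hAc : Aᶜ.ncard = q) (hp : 2 ≤ p) (hq : 2 ≤ q)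
    (v : V) (hv : ∀ w, w ≠ v → T.Adj v w) : False := by
  by_cases hvA : v ∈ A
  · have hsub : A ⊆ {v} := by
      intro a ha
      by_contra hne
      have := hbip _ _ (hv a (by simpa using hne))
      simp only [Set.mem_singleton_iff] at hne
      tauto
    have := Set.ncard_le_ncard hsub (Set.finite_singleton v)
    simp [Set.ncard_singleton, hA] at this
    omega
  · have hsub : Aᶜ ⊆ {v} := by
      intro a ha
      by_contra hne
      have := hbip _ _ (hv a (by simpa using hne))
      simp only [Set.mem_singleton_iff] at hne
      simp only [Set.mem_compl_iff] at ha
      tauto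
    have := Set.ncard_le_ncard hsub (Set.finite_singleton v)
    simp [Set.ncard_singleton, hAc] at this
    omega
lemma walk_parity {T : SimpleGraph V} {A : Set V}
    (hbip : ∀ x y, T.Adj x y → (x ∈ A ↔ y ∉ A)) :
    ∀ {x y : V} (W : T.Walk x y), ((x ∈ A) ↔ (y ∈ A)) ↔ Even W.length := by
  intro x y W
  induction W with
  | nil => simp
  | cons h W ih =>
    rename_i a b c
    have h1 := hbip _ _ h
    by_cases hA : a ∈ A <;> by_cases hB : b ∈ A <;> by_cases hC : c ∈ A <;>
      simp_all [Nat.even_add_one]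

lemma dist_parity {T : SimpleGraph V} {A : Set V}
    (hbip : ∀ x y, T.Adj x y → (x ∈ A ↔ y ∉ A)) (hc : T.Connected)
    {u v : V} (huv : T.Adj u v) (x : V) :
    ¬ (Even (T.dist x u) ↔ Even (T.dist x v)) := by
  obtain ⟨W1, h1⟩ := hc.exists_walk_length_eq_dist x u
  obtain ⟨W2, h2⟩ := hc.exists_walk_length_eq_dist x v
  have p1 := walk_parity hbip W1
  have p2 := walk_parity hbip W2
  have hb := hbip _ _ huv
  rw [h1] at p1; rw [h2] at p2
  by_cases hx : x ∈ A <;> by_cases hu : u ∈ A <;> by_cases hv : v ∈ A <;> simp_all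

lemma classify_aux {T : SimpleGraph V} {A : Set V}
    (hbip : ∀ x y, T.Adj x y → (x ∈ A ↔ y ∉ A)) (hc : T.Connected)
    {u v x : V} (huv : T.Adj u v) (hxu : x ≠ u) (hxv : x ≠ v)
    (hdu : T.dist x u ≤ 2) (hdv : T.dist x v ≤ 2) :
    (T.Adj u x ∧ T.dist x v = 2) ∨ (T.Adj v x ∧ T.dist x u = 2) := by
  have h1 : T.dist x u = 1 ∨ T.dist x u = 2 := by
    have := hc.pos_dist_of_ne hxu; omega
  have h2 : T.dist x v = 1 ∨ T.dist x v = 2 := by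
    have := hc.pos_dist_of_ne hxv; omega
  have hpar := dist_parity hbip hc huv x
  rcases h1 with h1 | h1 <;> rcases h2 with h2 | h2
  · rw [h1, h2] at hpar; simp at hpar
  · exact Or.inl ⟨(dist_eq_one_iff_adj.mp h1).symm, h2⟩
  · exact Or.inr ⟨(dist_eq_one_iff_adj.mp h2).symm, h1⟩
  · rw [h1, h2] at hpar; simp at hpar

lemma noC4 {T : SimpleGraph V} (hT : T.IsAcyclic) {u v x y : V}
    (huv : T.Adj u v) (hvy : T.Adj v y) (hux : T.Adj u x) (hxy : T.Adj x y)
    (hvx : v ≠ x) (huy : u ≠ y) : False := by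
  have hp1 : (Walk.cons huv (Walk.cons hvy Walk.nil) : T.Walk u y).IsPath := by
    simp [Walk.isPath_def, huv.ne, hvy.ne, huy]
  have hp2 : (Walk.cons hux (Walk.cons hxy Walk.nil) : T.Walk u y).IsPath := by
    simp [Walk.isPath_def, hux.ne, hxy.ne, huy]
  have := isAcyclic_iff_path_unique.mp hT ⟨_, hp1⟩ ⟨_, hp2⟩
  have := congrArg (fun p => (p : T.Path u y).1.support) this
  simp at this
  exact hvx this

lemma dist_two_common {T : SimpleGraph V} {a b : V} (h : T.dist a b = 2)
    (hr : T.Reachable a b) : ∃ c, T.Adj a c ∧ T.Adj c b := by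
  obtain ⟨W, hW⟩ := hr.exists_walk_length_eq_dist
  rw [h] at hW
  refine ⟨W.getVert 1, ?_, ?_⟩
  · have := W.adj_getVert_succ (i := 0) (by omega)
    simpa [Walk.getVert_zero] using this
  · have := W.adj_getVert_succ (i := 1) (by omega)
    have h2 : W.getVert 2 = b := by
      have := W.getVert_length; rw [hW] at this; exact this
    rwa [h2] at this

/-- Double star structure on a graph with centers u, v. -/
structure IsDS (T : SimpleGraph V) (u v : V) : Prop where
  huv : T.Adj u v
  classify : ∀ w, w ≠ u → w ≠ v →
    (T.Adj u w ∧ ¬ T.Adj v w) ∨ (T.Adj v w ∧ ¬ T.Adj u w)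
  noPend : ∀ x y, x ≠ u → x ≠ v → y ≠ u → y ≠ v → ¬ T.Adj x y

lemma ds_of_ecc2 [Finite V] [Nonempty V] {T : SimpleGraph V} {A : Set V}
    (hbip : ∀ x y, T.Adj x y → (x ∈ A ↔ y ∉ A)) (hc : T.Connected)
    (hac : T.IsAcyclic) {u v : V} (huv : T.Adj u v)
    (h2u : ecc T u ≤ 2) (h2v : ecc T v ≤ 2) : IsDS T u v := by
  have hdu : ∀ w, T.dist w u ≤ 2 := fun w => by
    rw [T.dist_comm]; exact ecc_le_iff.mp h2u w
  have hdv : ∀ w, T.dist w v ≤ 2 := fun w => by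
    rw [T.dist_comm]; exact ecc_le_iff.mp h2v w
  have hcl : ∀ w, w ≠ u → w ≠ v →
      (T.Adj u w ∧ ¬ T.Adj v w) ∨ (T.Adj v w ∧ ¬ T.Adj u w) := by
    intro w hwu hwv
    rcases classify_aux hbip hc huv hwu hwv (hdu w) (hdv w) with ⟨h, hd⟩ | ⟨h, hd⟩
    · exact Or.inl ⟨h, fun hvw => by
        rw [dist_eq_one_iff_adj.mpr hvw.symm] at hd; omega⟩
    · exact Or.inr ⟨h, fun hvw => by
        rw [dist_eq_one_iff_adj.mpr hvw.symm] at hd; omega⟩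
  refine ⟨huv, hcl, ?_⟩
  intro x y hxu hxv hyu hyv hxy
  rcases hcl x hxu hxv with ⟨h1, h1'⟩ | ⟨h1, h1'⟩ <;>
    rcases hcl y hyu hyv with ⟨h2, h2'⟩ | ⟨h2, h2'⟩
  · exact no_common hbip hxy h1 h2
  · exact noC4 hac huv h2 h1 hxy (fun h => hxv h.symm) (fun h => hyu h.symm)
  · exact noC4 hac huv.symm h2 h1 hxy (fun h => hxu h.symm) (fun h => hyv h.symm)
  · exact no_common hbip hxy h1 h2

lemma pend_not_ecc2 [Finite V] [Nonempty V] {T : SimpleGraph V} {A : Set V} {p q : ℕ}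
    (hbip : ∀ x y, T.Adj x y → (x ∈ A ↔ y ∉ A)) (hc : T.Connected)
    (hac : T.IsAcyclic)
    (hA : A.ncard = p) (hAc : Aᶜ.ncard = q) (hp : 2 ≤ p) (hq : 2 ≤ q)
    {u v x : V} (huv : T.Adj u v) (h2u : ecc T u ≤ 2) (h2v : ecc T v ≤ 2)
    (hux : T.Adj u x) (hxv : x ≠ v) (h2x : ecc T x ≤ 2) : False := by
  have D1 := ds_of_ecc2 hbip hc hac huv h2u h2v
  have D2 := ds_of_ecc2 hbip hc hac hux h2u h2x
  have hall : ∀ w, w ≠ u → T.Adj u w := by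
    intro w hwu
    by_contra hnadj
    have hwv : w ≠ v := fun h => hnadj (h ▸ huv)
    have hwx : w ≠ x := fun h => hnadj (h ▸ hux)
    have c1 : T.Adj v w := by
      rcases D1.classify w hwu hwv with ⟨h, _⟩ | ⟨h, _⟩
      · exact absurd h hnadj
      · exact h
    have c2 : T.Adj x w := by
      rcases D2.classify w hwu hwx with ⟨h, _⟩ | ⟨h, _⟩
      · exact absurd h hnadj
      · exact h
    have hvx : v ≠ x := Ne.symm hxv
    exact noC4 hac huv c1 hux c2 hvx hwu.symm
  exact not_all_adj hbip hA hAc hp hq u (fun w hw => hall w hw)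

lemma both2_aux [Finite V] [Nonempty V] {T : SimpleGraph V} {A : Set V} {p q : ℕ}
    (hbip : ∀ x y, T.Adj x y → (x ∈ A ↔ y ∉ A)) (hc : T.Connected)
    (hac : T.IsAcyclic)
    (hA : A.ncard = p) (hAc : Aᶜ.ncard = q) (hp : 2 ≤ p) (hq : 2 ≤ q)
    {u v x y : V} (huv : T.Adj u v) (hxy : T.Adj x y)
    (h2u : ecc T u ≤ 2) (h2v : ecc T v ≤ 2) (h2x : ecc T x ≤ 2) (h2y : ecc T y ≤ 2)
    (hxu : x ≠ u) (hxv : x ≠ v) : False := by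
  have D1 := ds_of_ecc2 hbip hc hac huv h2u h2v
  by_cases hyu : y = u
  · exact pend_not_ecc2 hbip hc hac hA hAc hp hq huv h2u h2v
      (hyu ▸ hxy.symm) hxv h2x
  by_cases hyv : y = v
  · exact pend_not_ecc2 hbip hc hac hA hAc hp hq huv.symm h2v h2u
      (hyv ▸ hxy.symm) hxu h2x
  rcases D1.classify x hxu hxv with ⟨h1, h1'⟩ | ⟨h1, h1'⟩ <;>
    rcases D1.classify y hyu hyv with ⟨h2, h2'⟩ | ⟨h2, h2'⟩
  · exact no_common hbip hxy h1 h2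
  · exact noC4 hac huv h2 h1 hxy (fun h => hxv h.symm) (fun h => hyu h.symm)
  · exact noC4 hac huv.symm h2 h1 hxy (fun h => hxu h.symm) (fun h => hyv h.symm)
  · exact no_common hbip hxy h1 h2

/-- Uniqueness: two edges whose endpoints all have eccentricity ≤ 2 coincide. -/
lemma both2_unique [Finite V] [Nonempty V] {T : SimpleGraph V} {A : Set V} {p q : ℕ}
    (hbip : ∀ x y, T.Adj x y → (x ∈ A ↔ y ∉ A)) (hc : T.Connected)
    (hac : T.IsAcyclic)
    (hA : A.ncard = p) (hAc : Aᶜ.ncard = q) (hp : 2 ≤ p) (hq : 2 ≤ q)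
    {u v x y : V} (huv : T.Adj u v) (hxy : T.Adj x y)
    (h2u : ecc T u ≤ 2) (h2v : ecc T v ≤ 2) (h2x : ecc T x ≤ 2) (h2y : ecc T y ≤ 2) :
    s(u, v) = s(x, y) := by
  by_cases hx : x = u ∨ x = v
  · by_cases hy : y = u ∨ y = v
    · have hne := hxy.ne
      rcases hx with rfl | rfl <;> rcases hy with rfl | rfl <;>
        simp_all [Sym2.eq_swap] <;> exact absurd rfl hne
    · push_neg at hy
      exact absurd (both2_aux hbip hc hac hA hAc hp hq huv hxy.symm
        h2u h2v h2y h2x hy.1 hy.2) (fun h => h)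
  · push_neg at hx
    exact absurd (both2_aux hbip hc hac hA hAc hp hq huv hxy
      h2u h2v h2x h2y hx.1 hx.2) (fun h => h)

lemma IsDS.symm {T : SimpleGraph V} {u v : V} (h : IsDS T u v) : IsDS T v u :=
  ⟨h.huv.symm, fun w h1 h2 => (h.classify w h2 h1).symm,
   fun x y h1 h2 h3 h4 => h.noPend x y h2 h1 h4 h3⟩

section DS

variable [Fintype V] {T : SimpleGraph V} {u v w1 w2 : V}

lemma ds_not_adj_u (hDS : IsDS T u v) (hw : T.Adj v w) (hwu : w ≠ u) :
    ¬ T.Adj u w := by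
  rcases hDS.classify w hwu hw.ne' with ⟨h1, h2⟩ | ⟨h1, h2⟩
  · exact absurd hw h2
  · exact h2

lemma ds_dist_u_le (hc : T.Connected) (hDS : IsDS T u v) (w : V) :
    T.dist u w ≤ 2 := by
  by_cases hwu : w = u
  · simp [hwu, SimpleGraph.dist_self]
  by_cases hwv : w = v
  · subst hwv; rw [dist_eq_one_iff_adj.mpr hDS.huv]; omega
  rcases hDS.classify w hwu hwv with ⟨h1, _⟩ | ⟨h1, _⟩
  · rw [dist_eq_one_iff_adj.mpr h1]; omega
  · have := dist_le (Walk.cons hDS.huv (Walk.cons h1 Walk.nil))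
    simpa using this

lemma ds_ecc_u [Nonempty V] (hc : T.Connected) (hDS : IsDS T u v)
    (hw2 : T.Adj v w2) (hw2u : w2 ≠ u) : ecc T u = 2 := by
  refine le_antisymm (ecc_le_iff.mpr (ds_dist_u_le hc hDS)) ?_
  have hna : ¬ T.Adj u w2 := ds_not_adj_u hDS hw2 hw2u
  have h1 : T.dist u w2 ≠ 1 := fun h => hna (dist_eq_one_iff_adj.mp h)
  have h0 : 0 < T.dist u w2 := hc.pos_dist_of_ne (Ne.symm hw2u)
  have := dist_le_ecc (G := T) u w2
  omega

lemma ds_ecc_pend [Nonempty V] (hc : T.Connected) (hDS : IsDS T u v)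
    (hw1 : T.Adj u w1) (hw1v : w1 ≠ v)
    (hw2 : T.Adj v w2) (hw2u : w2 ≠ u) : ecc T w1 = 3 := by
  have hw1u : w1 ≠ u := hw1.ne'
  have hw2v : w2 ≠ v := hw2.ne'
  have hnav : ¬ T.Adj v w1 := ds_not_adj_u hDS.symm hw1 hw1v
  have hnau : ¬ T.Adj u w2 := ds_not_adj_u hDS hw2 hw2u
  refine le_antisymm (ecc_le_iff.mpr ?_) ?_
  · intro z
    by_cases hz1 : z = w1
    · simp [hz1, SimpleGraph.dist_self]
    by_cases hzu : z = u
    · subst hzu; rw [T.dist_comm, dist_eq_one_iff_adj.mpr hw1]; omega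
    by_cases hzv : z = v
    · subst hzv
      have := dist_le (Walk.cons hw1.symm (Walk.cons hDS.huv Walk.nil))
      simp at this; omega
    rcases hDS.classify z hzu hzv with ⟨h1, _⟩ | ⟨h1, _⟩
    · have := dist_le (Walk.cons hw1.symm (Walk.cons h1 Walk.nil))
      simp at this; omega
    · have := dist_le (Walk.cons hw1.symm (Walk.cons hDS.huv (Walk.cons h1 Walk.nil)))
      simp at this; omega
  · -- dist w1 w2 = 3
    have hne : w1 ≠ w2 := fun h => hnav (h ▸ hw2)
    have hnadj : ¬ T.Adj w1 w2 := hDS.noPend w1 w2 hw1u hw1v hw2u hw2v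
    have h0 : 0 < T.dist w1 w2 := hc.pos_dist_of_ne hne
    have h1 : T.dist w1 w2 ≠ 1 := fun h => hnadj (dist_eq_one_iff_adj.mp h)
    have h2 : T.dist w1 w2 ≠ 2 := by
      intro h
      obtain ⟨c, hc1, hc2⟩ := dist_two_common h (hc w1 w2)
      by_cases hcu : c = u
      · exact hnau (hcu ▸ hc2)
      by_cases hcv : c = v
      · exact hnav (hcv ▸ hc1.symm)
      · exact hDS.noPend w1 c hw1u hw1v hcu hcv hc1
    have := dist_le_ecc (G := T) w1 w2
    omega

end DS

noncomputable def F {V : Type*} (G : SimpleGraph V) : Sym2 V → ℝ :=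
  Sym2.lift ⟨fun u v => 1 / (ecc G u : ℝ) + 1 / (ecc G v : ℝ), fun _ _ => by ring⟩

lemma ree_eq_sum_s15 {V : Type*} [Fintype V] (G : SimpleGraph V) [DecidableEq V]
    [DecidableRel G.Adj] [Fintype G.edgeSet] :
    ree G = ∑ e ∈ G.edgeFinset, F G e := by
  unfold ree F
  congr!

section DS2

variable [Fintype V] [DecidableEq V] {T : SimpleGraph V} [DecidableRel T.Adj]
  {u v w1 w2 : V}

lemma ds_edgeFinset (hDS : IsDS T u v) :
    T.edgeFinset = insert s(u, v)
      ((Finset.univ.filter (fun w => w ≠ u ∧ w ≠ v)).image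
        (fun w => if T.Adj u w then s(u, w) else s(v, w))) := by
  ext e
  induction e with
  | _ x y =>
    simp only [mem_edgeFinset, mem_edgeSet, Finset.mem_insert, Finset.mem_image,
      Finset.mem_filter, Finset.mem_univ, true_and]
    constructor
    · intro hxy
      by_cases hxu : x = u
      · subst hxu
        by_cases hyv : y = v
        · exact Or.inl (by rw [hyv])
        · refine Or.inr ⟨y, ⟨hxy.ne', hyv⟩, ?_⟩
          rw [if_pos hxy]
      by_cases hxv : x = v
      · subst hxv
        by_cases hyu : y = u
        · exact Or.inl (by rw [hyu, Sym2.eq_swap])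
        · refine Or.inr ⟨y, ⟨hyu, hxy.ne'⟩, ?_⟩
          rw [if_neg (ds_not_adj_u hDS hxy hyu), Sym2.eq_swap]
      by_cases hyu : y = u
      · subst hyu
        refine Or.inr ⟨x, ⟨hxu, hxv⟩, ?_⟩
        rw [if_pos hxy.symm, Sym2.eq_swap]
      by_cases hyv : y = v
      · subst hyv
        refine Or.inr ⟨x, ⟨hxu, hxv⟩, ?_⟩
        rw [if_neg (ds_not_adj_u hDS hxy.symm hxu), Sym2.eq_swap]
      · exact absurd hxy (hDS.noPend x y hxu hxv hyu hyv)
    · rintro (h | ⟨w, ⟨hwu, hwv⟩, h⟩)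
      · rw [Sym2.eq_iff] at h
        rcases h with ⟨rfl, rfl⟩ | ⟨rfl, rfl⟩
        · exact hDS.huv
        · exact hDS.huv.symm
      · by_cases hadj : T.Adj u w
        · rw [if_pos hadj, Sym2.eq_iff] at h
          rcases h with ⟨rfl, rfl⟩ | ⟨rfl, rfl⟩
          · exact hadj
          · exact hadj.symm
        · rw [if_neg hadj, Sym2.eq_iff] at h
          have hvw : T.Adj v w := by
            rcases hDS.classify w hwu hwv with ⟨h1, _⟩ | ⟨h1, _⟩
            · exact absurd h1 hadj
            · exact h1
          rcases h with ⟨rfl, rfl⟩ | ⟨rfl, rfl⟩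
          · exact hvw
          · exact hvw.symm

lemma ds_ree [Nonempty V] (hc : T.Connected) (hDS : IsDS T u v)
    (hw1 : T.Adj u w1) (hw1v : w1 ≠ v) (hw2 : T.Adj v w2) (hw2u : w2 ≠ u) :
    ree T = (5 * (Fintype.card V : ℝ) - 4) / 6 := by
  classical
  have hu2 : ecc T u = 2 := ds_ecc_u hc hDS hw2 hw2u
  have hv2 : ecc T v = 2 := ds_ecc_u hc hDS.symm hw1 hw1v
  rw [ree_eq_sum_s15, ds_edgeFinset hDS]
  have hnotmem : s(u, v) ∉ (Finset.univ.filter (fun w => w ≠ u ∧ w ≠ v)).image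
      (fun w => if T.Adj u w then s(u, w) else s(v, w)) := by
    simp only [Finset.mem_image, Finset.mem_filter, Finset.mem_univ, true_and]
    rintro ⟨w, ⟨hwu, hwv⟩, h⟩
    by_cases hadj : T.Adj u w <;> simp [hadj, Sym2.eq_iff] at h <;> tauto
  rw [Finset.sum_insert hnotmem]
  have hinj : Set.InjOn (fun w => if T.Adj u w then s(u, w) else s(v, w))
      (Finset.univ.filter (fun w => w ≠ u ∧ w ≠ v)) := by
    intro a ha b hb hab
    simp only [Finset.coe_filter, Set.mem_setOf_eq, Finset.mem_univ, true_and] at ha hb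
    by_cases h1 : T.Adj u a <;> by_cases h2 : T.Adj u b <;>
      simp only [h1, h2, if_pos, if_neg, if_true, if_false, Sym2.eq_iff] at hab <;>
      tauto
  rw [Finset.sum_image hinj]
  have hval : ∀ w ∈ Finset.univ.filter (fun w => w ≠ u ∧ w ≠ v),
      F T (if T.Adj u w then s(u, w) else s(v, w)) = 5 / 6 := by
    intro w hw
    simp only [Finset.mem_filter, Finset.mem_univ, true_and] at hw
    obtain ⟨hwu, hwv⟩ := hw
    have hw3 : ecc T w = 3 := by
      rcases hDS.classify w hwu hwv with ⟨h1, _⟩ | ⟨h1, _⟩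
      · exact ds_ecc_pend hc hDS h1 hwv hw2 hw2u
      · exact ds_ecc_pend hc hDS.symm h1 hwu hw1 hw1v
    by_cases hadj : T.Adj u w
    · rw [if_pos hadj]; simp [F, hu2, hw3]; norm_num
    · rw [if_neg hadj]; simp [F, hv2, hw3]; norm_num
  rw [Finset.sum_congr rfl hval]
  have hcard : (Finset.univ.filter (fun w => w ≠ u ∧ w ≠ v)).card =
      Fintype.card V - 2 := by
    have : (Finset.univ.filter (fun w => w ≠ u ∧ w ≠ v)) = ({u, v} : Finset V)ᶜ := by
      ext w; simp [not_or]
    rw [this, Finset.card_compl, Finset.card_insert_of_notMem (by simp [hDS.huv.ne]),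
      Finset.card_singleton]
  have hn2 : 2 ≤ Fintype.card V := Fintype.one_lt_card_iff.mpr ⟨u, v, hDS.huv.ne⟩
  have hFuv : F T s(u, v) = 1 := by simp [F, hu2, hv2]; norm_num
  rw [hFuv, Finset.sum_const, hcard]
  have : ((Fintype.card V - 2 : ℕ) : ℝ) = (Fintype.card V : ℝ) - 2 := by
    rw [Nat.cast_sub hn2]; norm_num
  rw [nsmul_eq_mul, this]
  ring

end DS2

lemma doubleStar_adj {a b : ℕ} (x y : Fin (a + b + 2)) :
    (doubleStar a b).Adj x y ↔
      (x.val = 0 ∧ y.val = 1) ∨ (y.val = 0 ∧ x.val = 1) ∨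
      (x.val = 0 ∧ 2 ≤ y.val ∧ y.val < a + 2) ∨
      (y.val = 0 ∧ 2 ≤ x.val ∧ x.val < a + 2) ∨
      (x.val = 1 ∧ a + 2 ≤ y.val) ∨ (y.val = 1 ∧ a + 2 ≤ x.val) := by
  simp only [doubleStar, SimpleGraph.fromRel_adj, ne_eq, Fin.ext_iff]
  constructor
  · rintro ⟨h, h2⟩; omega
  · intro h
    have hy := y.isLt
    constructor
    · omega
    · omega

open Finset in
lemma iso_of_ds {n a b : ℕ} (hn : n = a + b + 2) {T : SimpleGraph (Fin n)}
    {u v : Fin n} (hDS : IsDS T u v)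
    (ha : {w | w ≠ u ∧ w ≠ v ∧ T.Adj u w}.ncard = a)
    (hb : {w | w ≠ u ∧ w ≠ v ∧ T.Adj v w}.ncard = b) :
    Nonempty (T ≃g doubleStar a b) := by
  classical
  set Pu : Finset (Fin n) := univ.filter (fun w => w ≠ u ∧ w ≠ v ∧ T.Adj u w) with hPu
  set Pv : Finset (Fin n) := univ.filter (fun w => w ≠ u ∧ w ≠ v ∧ T.Adj v w) with hPv
  have ha' : Pu.card = a := by
    rw [← ha, Set.ncard_eq_toFinset_card', hPu]
    congr 1
    ext w
    simp
  have hb' : Pv.card = b := by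
    rw [← hb, Set.ncard_eq_toFinset_card', hPv]
    congr 1
    ext w
    simp
  let eu : Pu ≃ Fin a := Pu.equivFin.trans (finCongr ha')
  let ev : Pv ≃ Fin b := Pv.equivFin.trans (finCongr hb')
  have hadj_v : ∀ x, x ≠ u → x ≠ v → ¬ T.Adj u x → T.Adj v x := by
    intro x h1 h2 h3
    rcases hDS.classify x h1 h2 with ⟨h, _⟩ | ⟨h, _⟩
    · exact absurd h h3
    · exact h
  let f : Fin n → Fin (a + b + 2) := fun x =>
    if hu : x = u then ⟨0, by omega⟩
    else if hv : x = v then ⟨1, by omega⟩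
    else if h : T.Adj u x then
      ⟨2 + (eu ⟨x, by simp [hPu, hu, hv, h]⟩).val,
        by have := (eu ⟨x, by simp [hPu, hu, hv, h]⟩).isLt; omega⟩
    else ⟨a + 2 + (ev ⟨x, by simp [hPv, hu, hv, hadj_v x hu hv h]⟩).val,
      by have := (ev ⟨x, by simp [hPv, hu, hv, hadj_v x hu hv h]⟩).isLt; omega⟩
  have fu : (f u).val = 0 := by simp [f]
  have fv : (f v).val = 1 := by simp [f, hDS.huv.ne']
  have fpu : ∀ x, x ≠ u → x ≠ v → T.Adj u x →
      2 ≤ (f x).val ∧ (f x).val < a + 2 := by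
    intro x h1 h2 h3
    simp only [f, dif_neg h1, dif_neg h2, dif_pos h3]
    have := (eu ⟨x, by simp [hPu, h1, h2, h3]⟩).isLt
    omega
  have fpv : ∀ x, x ≠ u → x ≠ v → ¬ T.Adj u x →
      a + 2 ≤ (f x).val := by
    intro x h1 h2 h3
    simp only [f, dif_neg h1, dif_neg h2, dif_neg h3]
    omega
  have hval : ∀ x, x = u ∨ x = v ∨ (2 ≤ (f x).val ∧ (f x).val < a + 2 ∧ T.Adj u x)
      ∨ (a + 2 ≤ (f x).val ∧ T.Adj v x ∧ ¬ T.Adj u x) := by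
    intro x
    by_cases h1 : x = u
    · exact Or.inl h1
    by_cases h2 : x = v
    · exact Or.inr (Or.inl h2)
    by_cases h3 : T.Adj u x
    · have := fpu x h1 h2 h3
      exact Or.inr (Or.inr (Or.inl ⟨this.1, this.2, h3⟩))
    · exact Or.inr (Or.inr (Or.inr ⟨fpv x h1 h2 h3, hadj_v x h1 h2 h3, h3⟩))
  have hinj : Function.Injective f := by
    intro x y hxy
    have hv' := congrArg Fin.val hxy
    rcases hval x with hx | hx | hx | hx <;> rcases hval y with hy | hy | hy | hy
    · rw [hx, hy]
    · rw [hx, fu, hy, fv] at hv'; omega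
    · rw [hx, fu] at hv'; have := hy.1; omega
    · rw [hx, fu] at hv'; have := hy.1; omega
    · rw [hx, fv, hy, fu] at hv'; omega
    · rw [hx, hy]
    · rw [hx, fv] at hv'; have := hy.1; omega
    · rw [hx, fv] at hv'; have := hy.1; omega
    · rw [hy, fu] at hv'; have := hx.1; omega
    · rw [hy, fv] at hv'; have := hx.1; omega
    · have hxu : x ≠ u := hx.2.2.ne'
      have hxv : x ≠ v := fun h => by
        have h2 := hx.1; rw [h, fv] at h2; omega
      have hyu : y ≠ u := hy.2.2.ne'
      have hyv : y ≠ v := fun h => by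
        have h2 := hy.1; rw [h, fv] at h2; omega
      simp only [f, dif_neg hxu, dif_neg hxv, dif_pos hx.2.2,
        dif_neg hyu, dif_neg hyv, dif_pos hy.2.2, Fin.mk.injEq] at hxy
      have heq : eu ⟨x, by simp [hPu, hxu, hxv, hx.2.2]⟩ =
          eu ⟨y, by simp [hPu, hyu, hyv, hy.2.2]⟩ := Fin.ext (by omega)
      exact congrArg Subtype.val (eu.injective heq)
    · have h1 := hx.1; have h2 := hx.2.1; have h3 := hy.1; omega
    · rw [hy, fu] at hv'; have := hx.1; omega
    · rw [hy, fv] at hv'; have := hx.1; omega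
    · have h1 := hx.1; have h2 := hy.1; have h3 := hy.2.1; omega
    · have hxu : x ≠ u := fun h => by
        have h2 := hx.1; rw [h, fu] at h2; omega
      have hxv : x ≠ v := fun h => by
        have h2 := hx.1; rw [h, fv] at h2; omega
      have hyu : y ≠ u := fun h => by
        have h2 := hy.1; rw [h, fu] at h2; omega
      have hyv : y ≠ v := fun h => by
        have h2 := hy.1; rw [h, fv] at h2; omega
      simp only [f, dif_neg hxu, dif_neg hxv, dif_neg hx.2.2,
        dif_neg hyu, dif_neg hyv, dif_neg hy.2.2, Fin.mk.injEq] at hxy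
      have heq : ev ⟨x, by simp [hPv, hxu, hxv, hx.2.1]⟩ =
          ev ⟨y, by simp [hPv, hyu, hyv, hy.2.1]⟩ := Fin.ext (by omega)
      exact congrArg Subtype.val (ev.injective heq)
  have hbij : Function.Bijective f :=
    (Fintype.bijective_iff_injective_and_card f).mpr ⟨hinj, by simp [hn]⟩
  let e : Fin n ≃ Fin (a + b + 2) := Equiv.ofBijective f hbij
  refine ⟨⟨e, ?_⟩⟩
  intro x y
  show (doubleStar a b).Adj (f x) (f y) ↔ T.Adj x y
  rw [doubleStar_adj]
  have hvalx := hval x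
  have hvaly := hval y
  have pu_ne : ∀ z, (2 ≤ (f z).val ∧ (f z).val < a + 2 ∧ T.Adj u z) → z ≠ u ∧ z ≠ v := by
    intro z hz
    constructor
    · intro h; have := hz.1; rw [h, fu] at this; omega
    · intro h; have := hz.1; rw [h, fv] at this; omega
  have pv_ne : ∀ z, (a + 2 ≤ (f z).val ∧ T.Adj v z ∧ ¬ T.Adj u z) → z ≠ u ∧ z ≠ v := by
    intro z hz
    constructor
    · intro h; have := hz.1; rw [h, fu] at this; omega
    · intro h; have := hz.1; rw [h, fv] at this; omega
  constructor
  · rintro (⟨h1, h2⟩ | ⟨h1, h2⟩ | ⟨h1, h2, h3⟩ | ⟨h1, h2, h3⟩ | ⟨h1, h2⟩ | ⟨h1, h2⟩)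
    · have hx : x = u := by
        rcases hvalx with h | h | h | h
        · exact h
        · rw [h, fv] at h1; omega
        · have := h.1; omega
        · have := h.1; omega
      have hy : y = v := by
        rcases hvaly with h | h | h | h
        · rw [h, fu] at h2; omega
        · exact h
        · have := h.2.1; have := h.1; omega
        · have := h.1; omega
      rw [hx, hy]; exact hDS.huv
    · have hy : y = u := by
        rcases hvaly with h | h | h | h
        · exact h
        · rw [h, fv] at h1; omega
        · have := h.1; omega
        · have := h.1; omega
      have hx : x = v := by
        rcases hvalx with h | h | h | h
        · rw [h, fu] at h2; omega
        · exact h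
        · have := h.2.1; have := h.1; omega
        · have := h.1; omega
      rw [hx, hy]; exact hDS.huv.symm
    · have hx : x = u := by
        rcases hvalx with h | h | h | h
        · exact h
        · rw [h, fv] at h1; omega
        · have := h.1; omega
        · have := h.1; omega
      have hy : T.Adj u y := by
        rcases hvaly with h | h | h | h
        · rw [h, fu] at h2; omega
        · rw [h, fv] at h2; omega
        · exact h.2.2
        · have := h.1; omega
      rw [hx]; exact hy
    · have hy : y = u := by
        rcases hvaly with h | h | h | h
        · exact h
        · rw [h, fv] at h1; omega
        · have := h.1; omega
        · have := h.1; omega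
      have hx : T.Adj u x := by
        rcases hvalx with h | h | h | h
        · rw [h, fu] at h2; omega
        · rw [h, fv] at h2; omega
        · exact h.2.2
        · have := h.1; omega
      rw [hy]; exact hx.symm
    · have hx : x = v := by
        rcases hvalx with h | h | h | h
        · rw [h, fu] at h1; omega
        · exact h
        · have := h.1; have := h.2.1; omega
        · have := h.1; omega
      have hy : T.Adj v y := by
        rcases hvaly with h | h | h | h
        · rw [h, fu] at h2; omega
        · rw [h, fv] at h2; omega
        · have := h.1; have := h.2.1; omega
        · exact h.2.1
      rw [hx]; exact hy
    · have hy : y = v := by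
        rcases hvaly with h | h | h | h
        · rw [h, fu] at h1; omega
        · exact h
        · have := h.1; have := h.2.1; omega
        · have := h.1; omega
      have hx : T.Adj v x := by
        rcases hvalx with h | h | h | h
        · rw [h, fu] at h2; omega
        · rw [h, fv] at h2; omega
        · have := h.1; have := h.2.1; omega
        · exact h.2.1
      rw [hy]; exact hx.symm
  · intro hadj
    rcases hvalx with hx | hx | hx | hx <;> rcases hvaly with hy | hy | hy | hy
    · exact absurd (hx ▸ hy ▸ hadj) T.irrefl
    · exact Or.inl ⟨hx ▸ fu, hy ▸ fv⟩
    · exact Or.inr (Or.inr (Or.inl ⟨hx ▸ fu, hy.1, hy.2.1⟩))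
    · exact absurd (hx ▸ hadj) hy.2.2
    · exact Or.inr (Or.inl ⟨hy ▸ fu, hx ▸ fv⟩)
    · exact absurd (hx ▸ hy ▸ hadj) T.irrefl
    · exfalso
      obtain ⟨hyu, hyv⟩ := pu_ne y hy
      rcases hDS.classify y hyu hyv with ⟨_, h2⟩ | ⟨h1, h2⟩
      · exact h2 (hx ▸ hadj)
      · exact h2 hy.2.2
    · exact Or.inr (Or.inr (Or.inr (Or.inr (Or.inl ⟨hx ▸ fv, hy.1⟩))))
    · exact Or.inr (Or.inr (Or.inr (Or.inl ⟨hy ▸ fu, hx.1, hx.2.1⟩)))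
    · exfalso
      obtain ⟨hxu, hxv⟩ := pu_ne x hx
      rcases hDS.classify x hxu hxv with ⟨_, h2⟩ | ⟨h1, h2⟩
      · exact h2 (hy ▸ hadj).symm
      · exact h2 hx.2.2
    · exfalso
      obtain ⟨hxu, hxv⟩ := pu_ne x hx
      obtain ⟨hyu, hyv⟩ := pu_ne y hy
      exact hDS.noPend x y hxu hxv hyu hyv hadj
    · exfalso
      obtain ⟨hxu, hxv⟩ := pu_ne x hx
      obtain ⟨hyu, hyv⟩ := pv_ne y hy
      exact hDS.noPend x y hxu hxv hyu hyv hadj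
    · exact absurd (hy ▸ hadj).symm hx.2.2
    · exact Or.inr (Or.inr (Or.inr (Or.inr (Or.inr ⟨hy ▸ fv, hx.1⟩))))
    · exfalso
      obtain ⟨hxu, hxv⟩ := pv_ne x hx
      obtain ⟨hyu, hyv⟩ := pu_ne y hy
      exact hDS.noPend x y hxu hxv hyu hyv hadj
    · exfalso
      obtain ⟨hxu, hxv⟩ := pv_ne x hx
      obtain ⟨hyu, hyv⟩ := pv_ne y hy
      exact hDS.noPend x y hxu hxv hyu hyv hadj


set_option maxHeartbeats 1000000 in
/-- for q ≥ p > 2, n = p + q, and a tree T on n vertices with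
(p,q)-bipartition, ξ^{ee}(T) ≤ (5n-4)/6 with equality iff T is the double star
with q-1 pendants at one end and p-1 pendants at the other. -/
theorem stmt15 (p q n : ℕ) (hpq : p ≤ q) (hp : 2 < p) (hn : n = p + q)
    (T : SimpleGraph (Fin n)) (hT : T.IsTree)
    (A : Set (Fin n)) (hbip : ∀ x y, T.Adj x y → (x ∈ A ↔ y ∉ A))
    (hA : A.ncard = p) (hAc : Aᶜ.ncard = q) :
    ree T ≤ (5 * (n : ℝ) - 4) / 6 ∧
    (ree T = (5 * (n : ℝ) - 4) / 6 ↔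
      Nonempty (T ≃g doubleStar (q - 1) (p - 1))) := by
  classical
  have hn6 : 6 ≤ n := by omega
  haveI : Nonempty (Fin n) := ⟨⟨0, by omega⟩⟩
  have hc : T.Connected := hT.isConnected
  have hac : T.IsAcyclic := hT.IsAcyclic
  have hp2 : 2 ≤ p := by omega
  have hq2 : 2 ≤ q := by omega
  have hecc2 : ∀ v, 2 ≤ ecc T v := by
    intro v
    by_contra h
    push_neg at h
    have h1 : ecc T v ≤ 1 := by omega
    have h2 := ecc_le_iff.mp h1
    refine not_all_adj hbip hA hAc hp2 hq2 v (fun w hw => ?_)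
    have h3 := h2 w
    have hpos := hc.pos_dist_of_ne (Ne.symm hw)
    have h4 : T.dist v w = 1 := by omega
    exact dist_eq_one_iff_adj.mp h4
  have hcardE : T.edgeFinset.card = n - 1 := by
    have := hT.card_edgeFinset
    simp only [Fintype.card_fin] at this
    omega
  have hFval : ∀ x y : Fin n, F T s(x, y) = 1 / (ecc T x : ℝ) + 1 / (ecc T y : ℝ) :=
    fun x y => rfl
  have hinv : ∀ x : Fin n, 1 / (ecc T x : ℝ) ≤ 1 / 2 := by
    intro x
    apply one_div_le_one_div_of_le (by norm_num)
    exact_mod_cast hecc2 x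
  have hinv3 : ∀ x : Fin n, 3 ≤ ecc T x → 1 / (ecc T x : ℝ) ≤ 1 / 3 := by
    intro x hx
    apply one_div_le_one_div_of_le (by norm_num)
    exact_mod_cast hx
  have hF1 : ∀ x y : Fin n, F T s(x, y) ≤ 1 := by
    intro x y
    rw [hFval]
    have := hinv x; have := hinv y
    linarith
  have hF56 : ∀ x y : Fin n, ¬ (ecc T x ≤ 2 ∧ ecc T y ≤ 2) → F T s(x, y) ≤ 5 / 6 := by
    intro x y hne
    rw [hFval]
    rcases not_and_or.mp hne with h | h
    · have h3 : 3 ≤ ecc T x := by omega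
      have := hinv3 x h3; have := hinv y
      linarith
    · have h3 : 3 ≤ ecc T y := by omega
      have := hinv3 y h3; have := hinv x
      linarith
  have hstrict : (¬ ∃ u v, T.Adj u v ∧ ecc T u ≤ 2 ∧ ecc T v ≤ 2) →
      ree T ≤ (5 * (n : ℝ) - 5) / 6 := by
    intro hex
    rw [ree_eq_sum_s15]
    have hb : ∀ e ∈ T.edgeFinset, F T e ≤ 5 / 6 := by
      intro e he
      induction e with
      | _ x y =>
        have hadj : T.Adj x y := by rwa [mem_edgeFinset, mem_edgeSet] at he
        refine hF56 x y (fun hcon => hex ⟨x, y, hadj, hcon.1, hcon.2⟩)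
    calc ∑ e ∈ T.edgeFinset, F T e ≤ T.edgeFinset.card • (5 / 6 : ℝ) :=
          Finset.sum_le_card_nsmul _ _ _ hb
      _ = ((n : ℝ) - 1) * (5 / 6) := by
          rw [hcardE, nsmul_eq_mul, Nat.cast_sub (by omega)]
          norm_num
      _ ≤ (5 * (n : ℝ) - 5) / 6 := by ring_nf; linarith
  have hub : ree T ≤ (5 * (n : ℝ) - 4) / 6 := by
    by_cases hex : ∃ u v, T.Adj u v ∧ ecc T u ≤ 2 ∧ ecc T v ≤ 2
    · obtain ⟨u, v, huv, h2u, h2v⟩ := hex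
      have he0 : s(u, v) ∈ T.edgeFinset := by rwa [mem_edgeFinset, mem_edgeSet]
      rw [ree_eq_sum_s15, ← Finset.add_sum_erase _ _ he0]
      have hb : ∀ e ∈ T.edgeFinset.erase s(u, v), F T e ≤ 5 / 6 := by
        intro e he
        obtain ⟨hne, he'⟩ := Finset.mem_erase.mp he
        induction e with
        | _ x y =>
          have hadj : T.Adj x y := by rwa [mem_edgeFinset, mem_edgeSet] at he'
          refine hF56 x y (fun hcon => hne ?_)
          exact (both2_unique hbip hc hac hA hAc hp2 hq2 huv hadj
            h2u h2v hcon.1 hcon.2).symm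
      have hsum : ∑ e ∈ T.edgeFinset.erase s(u, v), F T e ≤
          ((n : ℝ) - 2) * (5 / 6) := by
        calc ∑ e ∈ T.edgeFinset.erase s(u, v), F T e
            ≤ (T.edgeFinset.erase s(u, v)).card • (5 / 6 : ℝ) :=
              Finset.sum_le_card_nsmul _ _ _ hb
          _ = ((n : ℝ) - 2) * (5 / 6) := by
              rw [Finset.card_erase_of_mem he0, hcardE, nsmul_eq_mul]
              rw [show n - 1 - 1 = n - 2 from by omega, Nat.cast_sub (by omega)]
              norm_num
      have h1 := hF1 u v
      linarith
    · have := hstrict hex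
      have hcast : (6 : ℝ) ≤ (n : ℝ) := by exact_mod_cast hn6
      linarith
  refine ⟨hub, ?_, ?_⟩
  · -- equality → double star
    intro heq
    by_cases hex : ∃ u v, T.Adj u v ∧ ecc T u ≤ 2 ∧ ecc T v ≤ 2
    · obtain ⟨u, v, huv, h2u, h2v⟩ := hex
      have hDS := ds_of_ecc2 hbip hc hac huv h2u h2v
      set Su : Set (Fin n) := {w | w ≠ u ∧ w ≠ v ∧ T.Adj u w} with hSudef
      set Sv : Set (Fin n) := {w | w ≠ u ∧ w ≠ v ∧ T.Adj v w} with hSvdef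
      have hvu := hbip u v huv
      have hfinSu : Su.Finite := Set.toFinite _
      have hfinSv : Sv.Finite := Set.toFinite _
      have hvSu : v ∉ Su := fun h => h.2.1 rfl
      have huSv : u ∉ Sv := fun h => h.1 rfl
      have hn' : n = (q - 1) + (p - 1) + 2 := by omega
      have hclassA : ∀ a : Fin n, a ≠ u → a ≠ v → T.Adj u a ∨ T.Adj v a := by
        intro a h1 h2
        rcases hDS.classify a h1 h2 with ⟨h, _⟩ | ⟨h, _⟩
        · exact Or.inl h
        · exact Or.inr h
      by_cases hvA : v ∈ A
      · have huA : u ∉ A := by tauto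
        have hA' : A = insert v Su := by
          ext a
          simp only [Set.mem_insert_iff, hSudef, Set.mem_setOf_eq]
          constructor
          · intro ha
            by_cases hav : a = v
            · exact Or.inl hav
            have hau : a ≠ u := fun h => huA (h ▸ ha)
            refine Or.inr ⟨hau, hav, ?_⟩
            rcases hDS.classify a hau hav with ⟨h1, _⟩ | ⟨h1, _⟩
            · exact h1
            · exact absurd ha ((hbip v a h1).mp hvA)
          · rintro (rfl | ⟨hau, hav, hadj⟩)
            · exact hvA
            · have := hbip u a hadj
              tauto
        have hAc' : Aᶜ = insert u Sv := by
          ext a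
          simp only [Set.mem_insert_iff, hSvdef, Set.mem_setOf_eq, Set.mem_compl_iff]
          constructor
          · intro ha
            by_cases hau : a = u
            · exact Or.inl hau
            have hav : a ≠ v := fun h => ha (h ▸ hvA)
            refine Or.inr ⟨hau, hav, ?_⟩
            rcases hDS.classify a hau hav with ⟨h1, _⟩ | ⟨h1, _⟩
            · exact absurd ((hbip u a h1).mpr ha) huA
            · exact h1
          · rintro (rfl | ⟨hau, hav, hadj⟩)
            · exact huA
            · have := hbip v a hadj
              tauto
        have hSu : Su.ncard = p - 1 := by
          rw [hA', Set.ncard_insert_of_notMem hvSu hfinSu] at hA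
          omega
        have hSv : Sv.ncard = q - 1 := by
          rw [hAc', Set.ncard_insert_of_notMem huSv hfinSv] at hAc
          omega
        refine iso_of_ds hn' hDS.symm ?_ ?_
        · have hseq : {w | w ≠ v ∧ w ≠ u ∧ T.Adj v w} = Sv := by
            ext w; simp only [hSvdef, Set.mem_setOf_eq]; tauto
          rw [hseq]; exact hSv
        · have hseq : {w | w ≠ v ∧ w ≠ u ∧ T.Adj u w} = Su := by
            ext w; simp only [hSudef, Set.mem_setOf_eq]; tauto
          rw [hseq]; exact hSu
      · have huA : u ∈ A := by tauto
        have hA' : A = insert u Sv := by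
          ext a
          simp only [Set.mem_insert_iff, hSvdef, Set.mem_setOf_eq]
          constructor
          · intro ha
            by_cases hau : a = u
            · exact Or.inl hau
            have hav : a ≠ v := fun h => hvA (h ▸ ha)
            refine Or.inr ⟨hau, hav, ?_⟩
            rcases hDS.classify a hau hav with ⟨h1, _⟩ | ⟨h1, _⟩
            · exact absurd ha ((hbip u a h1).mp huA)
            · exact h1
          · rintro (rfl | ⟨hau, hav, hadj⟩)
            · exact huA
            · have := hbip v a hadj
              tauto
        have hAc' : Aᶜ = insert v Su := by
          ext a
          simp only [Set.mem_insert_iff, hSudef, Set.mem_setOf_eq, Set.mem_compl_iff]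
          constructor
          · intro ha
            by_cases hav : a = v
            · exact Or.inl hav
            have hau : a ≠ u := fun h => ha (h ▸ huA)
            refine Or.inr ⟨hau, hav, ?_⟩
            rcases hDS.classify a hau hav with ⟨h1, _⟩ | ⟨h1, _⟩
            · exact h1
            · exact absurd ((hbip v a h1).mpr ha) hvA
          · rintro (rfl | ⟨hau, hav, hadj⟩)
            · exact hvA
            · have := hbip u a hadj
              tauto
        have hSv : Sv.ncard = p - 1 := by
          rw [hA', Set.ncard_insert_of_notMem huSv hfinSv] at hA
          omega
        have hSu : Su.ncard = q - 1 := by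
          rw [hAc', Set.ncard_insert_of_notMem hvSu hfinSu] at hAc
          omega
        exact iso_of_ds hn' hDS hSu hSv
    · exfalso
      have := hstrict hex
      rw [heq] at this
      have hcast : (6 : ℝ) ≤ (n : ℝ) := by exact_mod_cast hn6
      linarith
  · -- double star → equality
    rintro ⟨φ⟩
    have hb0 : 0 < (q - 1) + (p - 1) + 2 := by omega
    have hb1 : 1 < (q - 1) + (p - 1) + 2 := by omega
    have hb2 : 2 < (q - 1) + (p - 1) + 2 := by omega
    have hb3 : q + 1 < (q - 1) + (p - 1) + 2 := by omega
    set z0 : Fin ((q - 1) + (p - 1) + 2) := ⟨0, hb0⟩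
    set z1 : Fin ((q - 1) + (p - 1) + 2) := ⟨1, hb1⟩
    set z2 : Fin ((q - 1) + (p - 1) + 2) := ⟨2, hb2⟩
    set z3 : Fin ((q - 1) + (p - 1) + 2) := ⟨q + 1, hb3⟩
    have hz0val : z0.val = 0 := rfl
    have hz1val : z1.val = 1 := rfl
    have hz2val : z2.val = 2 := rfl
    have hz3val : z3.val = q + 1 := rfl
    set u : Fin n := φ.symm z0
    set v : Fin n := φ.symm z1
    set w1 : Fin n := φ.symm z2
    set w2 : Fin n := φ.symm z3
    have hφu : φ u = z0 := by simp [u]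
    have hφv : φ v = z1 := by simp [v]
    have hφw1 : φ w1 = z2 := by simp [w1]
    have hφw2 : φ w2 = z3 := by simp [w2]
    have hAdj : ∀ x y : Fin n, T.Adj x y ↔
        (doubleStar (q - 1) (p - 1)).Adj (φ x) (φ y) :=
      fun x y => (φ.map_adj_iff).symm
    have hinjφ : Function.Injective φ := fun a b h => by
      have := congrArg φ.symm h
      simpa using this
    have hval_ne : ∀ w : Fin n, w ≠ u → w ≠ v → 2 ≤ (φ w).val := by
      intro w h1 h2
      have h3 : (φ w).val ≠ 0 := by
        intro h
        exact h1 (hinjφ (by rw [hφu]; exact Fin.ext h))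
      have h4 : (φ w).val ≠ 1 := by
        intro h
        exact h2 (hinjφ (by rw [hφv]; exact Fin.ext h))
      omega
    have hDS : IsDS T u v := by
      refine ⟨?_, ?_, ?_⟩
      · rw [hAdj, hφu, hφv, doubleStar_adj]
        exact Or.inl ⟨rfl, rfl⟩
      · intro w hwu hwv
        have h2 := hval_ne w hwu hwv
        by_cases hlt : (φ w).val < q + 1
        · refine Or.inl ⟨?_, ?_⟩
          · rw [hAdj, hφu, doubleStar_adj]
            refine Or.inr (Or.inr (Or.inl ⟨rfl, h2, by omega⟩))
          · intro hadj
            have := (hAdj v w).mp hadj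
            rw [hφv, doubleStar_adj] at this
            omega
        · refine Or.inr ⟨?_, ?_⟩
          · rw [hAdj, hφv, doubleStar_adj]
            refine Or.inr (Or.inr (Or.inr (Or.inr (Or.inl ⟨rfl, by omega⟩))))
          · intro hadj
            have := (hAdj u w).mp hadj
            rw [hφu, doubleStar_adj] at this
            omega
      · intro x y hxu hxv hyu hyv hadj
        have h1 := hval_ne x hxu hxv
        have h2 := hval_ne y hyu hyv
        have := (hAdj x y).mp hadj
        rw [doubleStar_adj] at this
        omega
    have hw1 : T.Adj u w1 := by
      rw [hAdj, hφu, hφw1, doubleStar_adj]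
      exact Or.inr (Or.inr (Or.inl ⟨rfl, by omega, by omega⟩))
    have hw1v : w1 ≠ v := by
      intro h
      have h2 : φ w1 = φ v := congrArg φ h
      rw [hφw1, hφv] at h2
      have h3 := congrArg Fin.val h2
      rw [hz2val, hz1val] at h3
      omega
    have hw2 : T.Adj v w2 := by
      rw [hAdj, hφv, hφw2, doubleStar_adj]
      exact Or.inr (Or.inr (Or.inr (Or.inr (Or.inl ⟨rfl, by omega⟩))))
    have hw2u : w2 ≠ u := by
      intro h
      have h2 : φ w2 = φ u := congrArg φ h
      rw [hφw2, hφu] at h2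
      have h3 := congrArg Fin.val h2
      rw [hz3val, hz0val] at h3
      omega
    have := ds_ree hc hDS hw1 hw1v hw2 hw2u
    rw [this, Fintype.card_fin]
end
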